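/- Fix a linear order on the ground set W = {w₁, …, w_N} of a simple matroid, and order finite subsets X ⊆ W by the binary label L(X) = Σ_{w_i ∈ X} 2^{i-1}. If B is the basis of a flat F of rank n ≥ 1 with minimal label among all bases of F (the 'pointer' of F), and w_k is the element of B with the largest index, then B \ {w_k} is the minimal-label basis of the flat cl(B \ {w_k}), which has rank n−1. -/

import Mathlib

/-- The rank of a set `X` in a matroid `M`. -/
noncomputable def mRank {α : Type*} (M : Matroid α) (X : Set α) : ℕ :=
  sSup {n | ∃ I, M.Indep I ∧ I ⊆ X ∧ I.ncard = n}

/-- The binary label of a subset of the ordered ground set `Fin N`: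
bit `i` is set iff `wᵢ` belongs to the set. -/
noncomputable def label {N : ℕ} (X : Set (Fin N)) : ℕ :=
  ∑ i : Fin N, Set.indicator X (fun i => 2 ^ (i : ℕ)) i

/-!
Removing `k` from the independent set `B` leaves a basis of `cl(B \ {k})` with `n - 1` elements.
If `B'` is any basis of `cl(B \ {k})`, then `k ∉ cl(B')`, so `insert k B'` is independent and spans
`cl(B) = F`, i.e. it is a basis of `F`. Minimality of `B` then reads
`2 ^ k + label (B \ {k}) ≤ 2 ^ k + label B'`.
-/

lemma label_insert {N : ℕ} {X : Set (Fin N)} {k : Fin N} (hk : k ∉ X) :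
    label (insert k X) = 2 ^ (k : ℕ) + label X := by
  simp only [label, Set.insert_eq,
    Set.indicator_union_of_disjoint (Set.disjoint_singleton_left.2 hk), Finset.sum_add_distrib,
    Set.indicator_singleton, Finset.sum_pi_single', Finset.mem_univ, if_true]

section
variable {α : Type*} {M : Matroid α} {B I J X : Set α} {k : α}

lemma mRank_eq_ncard_of_isBasis [M.RankFinite] (hB : M.IsBasis B X) : mRank M X = B.ncard := by
  have hle : ∀ I, M.Indep I → I ⊆ X → I.ncard ≤ B.ncard := by
    intro I hI hIX
    obtain ⟨J, hJ, hIJ⟩ := hI.subset_isBasis_of_subset hIX hB.subset_ground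
    calc I.ncard ≤ J.ncard := Set.ncard_le_ncard hIJ hJ.indep.finite
      _ = B.ncard := by rw [Set.ncard_def, Set.ncard_def, hJ.encard_eq_encard hB]
  apply le_antisymm
  · exact csSup_le ⟨0, ∅, M.empty_indep, Set.empty_subset _, Set.ncard_empty _⟩
      (by rintro _ ⟨I, hI, hIX, rfl⟩; exact hle I hI hIX)
  · exact le_csSup ⟨B.ncard, by rintro _ ⟨I, hI, hIX, rfl⟩; exact hle I hI hIX⟩
      ⟨B, hB.indep, hB.subset, rfl⟩

lemma Matroid.Indep.isBasis_insert_of_isBasis_closure_diff (hI : M.Indep I) (hk : k ∈ I)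
    (hJ : M.IsBasis J (M.closure (I \ {k}))) : M.IsBasis (insert k J) (M.closure I) := by
  have hkJ : k ∉ M.closure J := hJ.closure_eq_right ▸ hI.notMem_closure_sdiff_of_mem hk
  have hindep : M.Indep (insert k J) :=
    (hJ.indep.insert_indep_iff_of_notMem fun h ↦ hkJ (M.subset_closure J hJ.indep.subset_ground h)).2
      ⟨hI.subset_ground hk, hkJ⟩
  have hcl : M.closure (insert k J) = M.closure I := by
    rw [← M.closure_insert_closure_eq_closure_insert, hJ.closure_eq_right,
      M.closure_insert_closure_eq_closure_insert, Set.insert_sdiff_singleton, Set.insert_eq_of_mem hk]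
  exact hcl ▸ hindep.isBasis_closure
end

theorem pointer_delete_top_general {N : ℕ} (M : Matroid (Fin N))
    (F : Set (Fin N)) (hF : M.IsFlat F) (n : ℕ)
    (hrank : mRank M F = n)
    (B : Set (Fin N)) (hB : M.IsBasis B F)
    (hmin : ∀ B', M.IsBasis B' F → label B ≤ label B')
    (k : Fin N) (hk : k ∈ B) :
    M.IsBasis (B \ {k}) (M.closure (B \ {k})) ∧
    mRank M (M.closure (B \ {k})) = n - 1 ∧
    ∀ B', M.IsBasis B' (M.closure (B \ {k})) → label (B \ {k}) ≤ label B' := by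
  have hbasis : M.IsBasis (B \ {k}) (M.closure (B \ {k})) :=
    (hB.indep.subset Set.sdiff_subset).isBasis_closure
  refine ⟨hbasis, ?_, fun B' hB' ↦ ?_⟩
  · rw [mRank_eq_ncard_of_isBasis hbasis, Set.ncard_sdiff_singleton_of_mem hk,
      ← mRank_eq_ncard_of_isBasis hB, hrank]
  · have hkB' : k ∉ B' := fun h ↦ hB.indep.notMem_closure_sdiff_of_mem hk (hB'.subset h)
    have hext := hB.indep.isBasis_insert_of_isBasis_closure_diff hk hB'
    rw [hB.closure_eq_closure, hF.closure] at hext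
    have := hmin _ hext
    rw [label_insert hkB', ← Set.insert_sdiff_self_of_mem hk, label_insert (by simp)] at this
    omega

/-- If `B` is the minimal-label basis (the pointer) of a flat `F` of rank
`n ≥ 1` in a simple matroid, and `k` is the element of `B` with largest index,
then `B \ {k}` is the minimal-label basis of the flat `cl(B \ {k})`, which has
rank `n - 1`. -/
theorem pointer_delete_top {N : ℕ} (M : Matroid (Fin N)) [M.Finite]
    (hE : M.E = Set.univ)
    (hsimple : ∀ X : Set (Fin N), X.ncard ≤ 2 → M.Indep X)
    (F : Set (Fin N)) (hF : M.IsFlat F) (n : ℕ) (hn : 1 ≤ n)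
    (hrank : mRank M F = n)
    (B : Set (Fin N)) (hB : M.IsBasis B F)
    (hmin : ∀ B', M.IsBasis B' F → label B ≤ label B')
    (k : Fin N) (hk : k ∈ B) (hktop : ∀ j ∈ B, j ≤ k) :
    M.IsBasis (B \ {k}) (M.closure (B \ {k})) ∧
    mRank M (M.closure (B \ {k})) = n - 1 ∧
    ∀ B', M.IsBasis B' (M.closure (B \ {k})) → label (B \ {k}) ≤ label B' :=
  pointer_delete_top_general M F hF n hrank B hB hmin k hk
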